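/- arXiv:2602.07230 — 2 statements merged into one kernel-verified Lean document; each statement's English description precedes it below -/
import Mathlib

section
/- Every nonnegative b-transshipment x on a finite directed acyclic graph admits a decomposition into at most |A| directed paths, each from a source (vertex with b(v) > 0) to a sink (vertex with b(v) < 0), such that for every arc a the sum of path values over paths using a equals x_a. -/
/-!
Peeling: while `x ≠ 0`, a vertex that is minimal among tails of positive arcs has no positive
inflow, hence is a source; following positive arcs out of it (conservation lets us leave every
non-sink we enter, acyclicity makes this stop) reaches a sink. Subtracting the largest admissible
multiple of this path keeps `x ≥ 0`, does not create new sources or sinks, and zeroes an arc or a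
balance, so induction on the number of nonzero arcs and balances yields a decomposition.
It may use more than `|A|` paths; a conic Carathéodory argument then discards paths whose arc
incidence vectors in `ℝ^A` are linearly dependent until at most `|A|` remain.
-/

open Finset

section ConicCaratheodory

variable {ι K M : Type*} [Field K] [LinearOrder K] [IsStrictOrderedRing K]
  [AddCommGroup M] [Module K M] {v : ι → M}

theorem exists_ssubset_pos_combination_of_not_linearIndepOn {s : Finset ι} {w : ι → K}
    (hw : ∀ i ∈ s, 0 < w i) (hs : ¬ LinearIndepOn K v s) :
    ∃ t ⊂ s, ∃ w' : ι → K, (∀ i ∈ t, 0 < w' i) ∧ ∑ i ∈ t, w' i • v i = ∑ i ∈ s, w i • v i := by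
  classical
  obtain ⟨g, hg, i₁, hi₁, hgi₁⟩ : ∃ g : ι → K, ∑ i ∈ s, g i • v i = 0 ∧ ∃ i ∈ s, 0 < g i := by
    obtain ⟨g, hg, i, hi, hgi⟩ := not_linearIndepOn_finset_iff.mp hs
    rcases hgi.lt_or_gt with hneg | hpos
    · exact ⟨-g, by simp [neg_smul, sum_neg_distrib, hg], i, hi, by simpa using hneg⟩
    · exact ⟨g, hg, i, hi, hpos⟩
  -- move along the relation `g` until the first coefficient of `w - μ • g` vanishes
  have hS : (s.filter (0 < g ·)).Nonempty := ⟨i₁, mem_filter.mpr ⟨hi₁, hgi₁⟩⟩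
  obtain ⟨i₀, hi₀, hμ⟩ := exists_mem_eq_inf' hS (fun i => w i / g i)
  set μ := (s.filter (0 < g ·)).inf' hS (fun i => w i / g i)
  rw [mem_filter] at hi₀
  have hμ_pos : 0 < μ := (lt_inf'_iff hS).mpr fun i hi =>
    div_pos (hw i (mem_filter.mp hi).1) (mem_filter.mp hi).2
  have hμ_le : ∀ i ∈ s, μ * g i ≤ w i := by
    intro i hi
    rcases le_or_gt (g i) 0 with hgi | hgi
    · nlinarith [hw i hi]
    · exact (le_div_iff₀ hgi).mp (inf'_le _ (mem_filter.mpr ⟨hi, hgi⟩))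
  set w' : ι → K := fun i => w i - μ * g i
  refine ⟨s.filter (0 < w' ·), ?_, w', fun i hi => (mem_filter.mp hi).2, ?_⟩
  · refine filter_ssubset.mpr ⟨i₀, hi₀.1, ?_⟩
    simp [w', hμ, div_mul_cancel₀ _ hi₀.2.ne']
  · calc ∑ i ∈ s.filter (0 < w' ·), w' i • v i = ∑ i ∈ s, w' i • v i := by
          refine sum_filter_of_ne fun i hi hne => (sub_nonneg.mpr (hμ_le i hi)).lt_of_ne' ?_
          exact fun h => hne (by simp only [w', h, zero_smul])
      _ = ∑ i ∈ s, w i • v i := by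
          simp [w', sub_smul, sum_sub_distrib, mul_smul, ← smul_sum, hg]

theorem exists_subset_pos_combination_card_le_finrank [Module.Finite K M] (s : Finset ι)
    (w : ι → K) (hw : ∀ i ∈ s, 0 < w i) :
    ∃ t ⊆ s, ∃ w' : ι → K, (∀ i ∈ t, 0 < w' i) ∧
      ∑ i ∈ t, w' i • v i = ∑ i ∈ s, w i • v i ∧ t.card ≤ Module.finrank K M := by
  induction s using Finset.strongInduction generalizing w with
  | H s ih =>
    by_cases hs : LinearIndepOn K v s
    · exact ⟨s, subset_rfl, w, hw, rfl, by simpa using hs.fintype_card_le_finrank⟩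
    obtain ⟨t, hts, w', hw', hsum⟩ := exists_ssubset_pos_combination_of_not_linearIndepOn hw hs
    obtain ⟨u, hut, w'', hw'', hsum', hcard⟩ := ih t hts w' hw'
    exact ⟨u, hut.trans hts.subset, w'', hw'', hsum'.trans hsum, hcard⟩

theorem exists_pos_combination_insert [DecidableEq ι] {s : Finset ι} {w : ι → K}
    (hw : ∀ i ∈ s, 0 < w i) (j : ι) {c : K} (hc : 0 < c) :
    ∃ w' : ι → K, (∀ i ∈ insert j s, 0 < w' i) ∧
      ∑ i ∈ insert j s, w' i • v i = ∑ i ∈ s, w i • v i + c • v j := by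
  by_cases hj : j ∈ s
  · refine ⟨Function.update w j (w j + c), fun i hi => ?_, ?_⟩
    · rcases eq_or_ne i j with rfl | hij
      · simpa using add_pos (hw i hj) hc
      · simpa [hij] using hw i ((mem_insert.mp hi).resolve_left hij)
    · rw [insert_eq_of_mem hj, ← add_sum_erase _ _ hj, ← add_sum_erase _ _ hj,
        Function.update_self, add_smul,
        sum_congr rfl fun i hi => by rw [Function.update_of_ne (ne_of_mem_erase hi)]]
      abel
  · refine ⟨Function.update w j c, fun i hi => ?_, ?_⟩
    · rcases eq_or_ne i j with rfl | hij
      · simpa using hc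
      · simpa [hij] using hw i ((mem_insert.mp hi).resolve_left hij)
    · rw [sum_insert hj, Function.update_self, add_comm,
        sum_congr rfl fun i hi => by rw [Function.update_of_ne (ne_of_mem_of_not_mem hi hj)]]

end ConicCaratheodory

section SignPattern

variable {ι : Type*} {f g : ι → ℝ}

def SignLE (f g : ι → ℝ) : Prop := ∀ i, (0 < f i → 0 < g i) ∧ (f i < 0 → g i < 0)

theorem signLE_of_nonneg_of_le (hf : 0 ≤ f) (hfg : f ≤ g) : SignLE f g :=
  fun i => ⟨fun h => h.trans_le (hfg i), fun h => absurd h (hf i).not_gt⟩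

theorem signLE_sub_smul_single_sub_single [DecidableEq ι] (b : ι → ℝ) {s t : ι} {δ : ℝ}
    (hδ : 0 < δ) (hs : δ ≤ b s) (ht : δ ≤ -b t) :
    SignLE (b - δ • (Pi.single s 1 - Pi.single t 1)) b := by
  have hst : s ≠ t := by rintro rfl; linarith
  intro i
  rcases eq_or_ne i s with rfl | his
  · simp only [Pi.sub_apply, Pi.smul_apply, Pi.single_eq_same, Pi.single_eq_of_ne hst, smul_eq_mul]
    constructor <;> intro <;> linarith
  rcases eq_or_ne i t with rfl | hit
  · simp only [Pi.sub_apply, Pi.smul_apply, Pi.single_eq_same, Pi.single_eq_of_ne his, smul_eq_mul]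
    constructor <;> intro <;> linarith
  · simp [his, hit]

variable [Fintype ι]

theorem SignLE.filter_ne_zero_subset (h : SignLE f g) :
    univ.filter (f · ≠ 0) ⊆ univ.filter (g · ≠ 0) := by
  intro i
  simp only [mem_filter, mem_univ, true_and]
  intro hfi
  rcases hfi.lt_or_gt with hneg | hpos
  exacts [((h i).2 hneg).ne, ((h i).1 hpos).ne']

theorem SignLE.card_filter_ne_zero_le (h : SignLE f g) :
    #(univ.filter (f · ≠ 0)) ≤ #(univ.filter (g · ≠ 0)) :=
  card_le_card h.filter_ne_zero_subset

theorem SignLE.card_filter_ne_zero_lt (h : SignLE f g) {i : ι} (hf : f i = 0) (hg : g i ≠ 0) :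
    #(univ.filter (f · ≠ 0)) < #(univ.filter (g · ≠ 0)) :=
  card_lt_card <| (ssubset_iff_of_subset h.filter_ne_zero_subset).mpr
    ⟨i, by simpa using hg, by simpa using hf⟩

theorem exists_max_smul_le {x y : ι → ℝ} (hx : 0 ≤ x) (hy : 0 ≤ y) (hy0 : ∃ i, 0 < y i)
    (hxy : ∀ i, 0 < y i → 0 < x i) : ∃ ε > 0, ε • y ≤ x ∧ ∃ i, 0 < y i ∧ ε * y i = x i := by
  have hS : (univ.filter (0 < y ·)).Nonempty := by simpa [Finset.Nonempty] using hy0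
  obtain ⟨i₀, hi₀, hε⟩ := exists_mem_eq_inf' hS (fun i => x i / y i)
  rw [mem_filter] at hi₀
  refine ⟨_, (lt_inf'_iff hS).mpr fun i hi => div_pos (hxy i (mem_filter.mp hi).2)
    (mem_filter.mp hi).2, fun i => ?_, i₀, hi₀.2, by rw [hε, div_mul_cancel₀ _ hi₀.2.ne']⟩
  rcases (hy i).eq_or_lt with hyi | hyi
  · simpa [← hyi] using hx i
  · exact (le_div_iff₀ hyi).mp (inf'_le _ (mem_filter.mpr ⟨mem_univ i, hyi⟩))

end SignPattern

theorem wellFounded_of_forall_not_transGen {β : Type*} [Finite β] {r : β → β → Prop}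
    (h : ∀ v, ¬ Relation.TransGen r v v) : WellFounded r :=
  have : Std.Irrefl (Relation.TransGen r) := ⟨h⟩
  Subrelation.wf Relation.TransGen.single (Finite.wellFounded_of_trans_of_irrefl _)

section FlowDecomposition

variable {V α : Type*} (tl hd : α → V)

def IsFlowPath (b : V → ℝ) (p : List α) : Prop :=
  ∃ hne : p ≠ [], p.IsChain (fun a a' => hd a = tl a') ∧
    0 < b (tl (p.head hne)) ∧ b (hd (p.getLast hne)) < 0

theorem IsFlowPath.mono {tl hd} {b b' : V → ℝ} (h : SignLE b' b) {p : List α}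
    (hp : IsFlowPath tl hd b' p) : IsFlowPath tl hd b p :=
  let ⟨hne, hch, hs, ht⟩ := hp
  ⟨hne, hch, (h _).1 hs, (h _).2 ht⟩

def PosArc (x : α → ℝ) (u z : V) : Prop := ∃ a, 0 < x a ∧ tl a = u ∧ hd a = z

theorem wellFounded_posArc [Finite V]
    (hacyc : ∀ v : V, ¬ Relation.TransGen (fun u z => ∃ a, tl a = u ∧ hd a = z) v v)
    (x : α → ℝ) : WellFounded (PosArc tl hd x) :=
  wellFounded_of_forall_not_transGen fun v h =>
    hacyc v (h.mono (fun _ _ ⟨a, _, hu, hz⟩ => ⟨a, hu, hz⟩) _ _)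

theorem wellFounded_flip_posArc [Finite V]
    (hacyc : ∀ v : V, ¬ Relation.TransGen (fun u z => ∃ a, tl a = u ∧ hd a = z) v v)
    (x : α → ℝ) : WellFounded (flip (PosArc tl hd x)) :=
  wellFounded_of_forall_not_transGen fun v h =>
    hacyc v (Relation.transGen_swap.mp (h.mono (fun _ _ ⟨a, _, hu, hz⟩ => ⟨a, hu, hz⟩) _ _))

section ArcCount

variable [DecidableEq α]

def arcCount (p : List α) : α → ℝ := fun a => (p.count a : ℝ)

theorem arcCount_nonneg (p : List α) : 0 ≤ arcCount p := fun _ => Nat.cast_nonneg _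

theorem arcCount_pos_iff {p : List α} {a : α} : 0 < arcCount p a ↔ a ∈ p := by
  simp [arcCount, List.count_pos_iff]

theorem arcCount_nil : arcCount ([] : List α) = 0 := by
  ext; simp [arcCount]

theorem arcCount_cons (e : α) (p : List α) : arcCount (e :: p) = Pi.single e 1 + arcCount p := by
  ext a
  simp only [arcCount, List.count_cons, Pi.add_apply, Pi.single_apply, beq_iff_eq]
  split_ifs <;> simp_all [add_comm]

end ArcCount

variable [DecidableEq V] [Fintype α]

def netOutflow : (α → ℝ) →ₗ[ℝ] V → ℝ where
  toFun x v :=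
    ∑ a ∈ univ.filter (fun a => tl a = v), x a - ∑ a ∈ univ.filter (fun a => hd a = v), x a
  map_add' x y := by ext v; simp only [Pi.add_apply, sum_add_distrib]; ring
  map_smul' c x := by ext v; simp [mul_sum, mul_sub]

theorem netOutflow_apply (x : α → ℝ) (v : V) : netOutflow tl hd x v =
    ∑ a ∈ univ.filter (fun a => tl a = v), x a - ∑ a ∈ univ.filter (fun a => hd a = v), x a :=
  rfl

theorem netOutflow_single [DecidableEq α] (e : α) :
    netOutflow tl hd (Pi.single e 1) = Pi.single (tl e) 1 - Pi.single (hd e) 1 := by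
  ext v; simp [netOutflow_apply, Pi.single_apply, @eq_comm _ v]

theorem netOutflow_arcCount [DecidableEq α] {p : List α} (hne : p ≠ [])
    (hp : p.IsChain (fun a a' => hd a = tl a')) :
    netOutflow tl hd (arcCount p) =
      Pi.single (tl (p.head hne)) 1 - Pi.single (hd (p.getLast hne)) 1 := by
  induction p with
  | nil => contradiction
  | cons e q ih =>
    rw [arcCount_cons, map_add, netOutflow_single]
    rcases q with _ | ⟨c, q⟩
    · simp [arcCount_nil]
    · rw [ih (List.cons_ne_nil c q) hp.tail, List.getLast_cons (List.cons_ne_nil c q),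
        List.head_cons, List.head_cons, (List.isChain_cons_cons.mp hp).1]
      abel

noncomputable def supportCard [Fintype V] (x : α → ℝ) : ℕ :=
  #(univ.filter (x · ≠ 0)) + #(univ.filter (netOutflow tl hd x · ≠ 0))

variable {tl hd} {x : α → ℝ}

theorem supportCard_lt_of_signLE [Fintype V] {x' : α → ℝ} (hx : SignLE x' x)
    (hb : SignLE (netOutflow tl hd x') (netOutflow tl hd x))
    (h : (∃ a, x' a = 0 ∧ x a ≠ 0) ∨ ∃ v, netOutflow tl hd x' v = 0 ∧ netOutflow tl hd x v ≠ 0) :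
    supportCard tl hd x' < supportCard tl hd x := by
  have := hx.card_filter_ne_zero_le
  have := hb.card_filter_ne_zero_le
  rcases h with ⟨a, ha', ha⟩ | ⟨v, hv', hv⟩
  · have := hx.card_filter_ne_zero_lt ha' ha
    unfold supportCard; omega
  · have := hb.card_filter_ne_zero_lt hv' hv
    unfold supportCard; omega

theorem exists_posArc_out_of_posArc_in (hx : 0 ≤ x) {u v : V} (huv : PosArc tl hd x u v)
    (hv : 0 ≤ netOutflow tl hd x v) : ∃ z, PosArc tl hd x v z := by
  obtain ⟨a, ha, -, rfl⟩ := huv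
  have hin : x a ≤ ∑ e ∈ univ.filter (fun e => hd e = hd a), x e :=
    single_le_sum (fun e _ => hx e) (by simp)
  have hout : ∑ e ∈ univ.filter (fun e => tl e = hd a), (0 : ℝ) <
      ∑ e ∈ univ.filter (fun e => tl e = hd a), x e := by
    rw [netOutflow_apply] at hv
    simp only [sum_const_zero]
    linarith
  obtain ⟨e, he, hxe⟩ := exists_lt_of_sum_lt hout
  exact ⟨hd e, e, hxe, (mem_filter.mp he).2, rfl⟩

theorem netOutflow_pos_of_isSource (hx : 0 ≤ x) {v : V} (hout : ∃ z, PosArc tl hd x v z)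
    (hin : ∀ u, ¬ PosArc tl hd x u v) : 0 < netOutflow tl hd x v := by
  obtain ⟨z, a, ha, rfl, rfl⟩ := hout
  have hin0 : ∑ e ∈ univ.filter (fun e => hd e = tl a), x e = 0 :=
    sum_eq_zero fun e he => (hx e).antisymm' <| not_lt.mp fun hxe =>
      hin (tl e) ⟨e, hxe, rfl, (mem_filter.mp he).2⟩
  have hout : x a ≤ ∑ e ∈ univ.filter (fun e => tl e = tl a), x e :=
    single_le_sum (fun e _ => hx e) (by simp)
  rw [netOutflow_apply]
  linarith

variable [Fintype V]
  (hacyc : ∀ v : V, ¬ Relation.TransGen (fun u z => ∃ a, tl a = u ∧ hd a = z) v v)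
include hacyc

theorem exists_walk_to_sink (hx : 0 ≤ x) (u : V) (hu : ∃ z, PosArc tl hd x u z) :
    ∃ p, ∃ hne : p ≠ [], p.IsChain (fun a a' => hd a = tl a') ∧ (∀ e ∈ p, 0 < x e) ∧
      tl (p.head hne) = u ∧ netOutflow tl hd x (hd (p.getLast hne)) < 0 := by
  induction u using (wellFounded_flip_posArc tl hd hacyc x).induction with
  | _ u ih =>
  obtain ⟨z, a, ha, rfl, rfl⟩ := hu
  by_cases hsink : netOutflow tl hd x (hd a) < 0
  · exact ⟨[a], List.cons_ne_nil _ _, List.isChain_singleton a, by simpa using ha, rfl, hsink⟩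
  obtain ⟨p, hne, hch, hpos, hhead, hlast⟩ := ih (hd a) ⟨a, ha, rfl, rfl⟩
    (exists_posArc_out_of_posArc_in hx ⟨a, ha, rfl, rfl⟩ (not_lt.mp hsink))
  exact ⟨a :: p, List.cons_ne_nil _ _, hch.cons_of_ne_nil hne hhead.symm,
    List.forall_mem_cons.mpr ⟨ha, hpos⟩, rfl, by rwa [List.getLast_cons hne]⟩

theorem exists_flowPath (hx : 0 ≤ x) (hx0 : x ≠ 0) :
    ∃ p, IsFlowPath tl hd (netOutflow tl hd x) p ∧ ∀ e ∈ p, 0 < x e := by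
  obtain ⟨a, ha⟩ : ∃ a, 0 < x a := by
    by_contra! h
    exact hx0 (le_antisymm h hx)
  obtain ⟨u, ⟨z, huz⟩, hmin⟩ := (wellFounded_posArc tl hd hacyc x).has_min
    {u | ∃ z, PosArc tl hd x u z} ⟨tl a, hd a, a, ha, rfl, rfl⟩
  have hsource := netOutflow_pos_of_isSource hx ⟨z, huz⟩ fun w hwu => hmin w ⟨u, hwu⟩ hwu
  obtain ⟨p, hne, hch, hpos, hhead, hlast⟩ := exists_walk_to_sink hacyc hx u ⟨z, huz⟩
  exact ⟨p, ⟨hne, hch, hhead ▸ hsource, hlast⟩, hpos⟩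

theorem exists_flowPath_peel [DecidableEq α] (hx : 0 ≤ x) (hx0 : x ≠ 0) :
    ∃ p, IsFlowPath tl hd (netOutflow tl hd x) p ∧ ∃ δ : ℝ, 0 < δ ∧ 0 ≤ x - δ • arcCount p ∧
      SignLE (netOutflow tl hd (x - δ • arcCount p)) (netOutflow tl hd x) ∧
      supportCard tl hd (x - δ • arcCount p) < supportCard tl hd x := by
  obtain ⟨p, hpath, hpos⟩ := exists_flowPath hacyc hx hx0
  obtain ⟨hne, hch, hs, ht⟩ := id hpath
  obtain ⟨ε, hε, hεx, a₀, ha₀, hεa₀⟩ := exists_max_smul_le hx (arcCount_nonneg p)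
    ⟨p.head hne, arcCount_pos_iff.mpr (List.head_mem hne)⟩
    fun a ha => hpos a (arcCount_pos_iff.mp ha)
  set b := netOutflow tl hd x
  set δ := min (min (b (tl (p.head hne))) (-b (hd (p.getLast hne)))) ε
  have hδ : 0 < δ := lt_min (lt_min hs (neg_pos.mpr ht)) hε
  have hδx : δ • arcCount p ≤ x := fun a =>
    (mul_le_mul_of_nonneg_right (min_le_right _ _) (arcCount_nonneg p a)).trans (hεx a)
  have hb' : netOutflow tl hd (x - δ • arcCount p) =
      b - δ • (Pi.single (tl (p.head hne)) 1 - Pi.single (hd (p.getLast hne)) 1) := by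
    rw [map_sub, map_smul, netOutflow_arcCount tl hd hne hch]
  have hsx : SignLE (x - δ • arcCount p) x :=
    signLE_of_nonneg_of_le (sub_nonneg.mpr hδx)
      (sub_le_self _ (smul_nonneg hδ.le (arcCount_nonneg p)))
  have hsb : SignLE (netOutflow tl hd (x - δ • arcCount p)) b := hb' ▸
    signLE_sub_smul_single_sub_single b hδ ((min_le_left _ _).trans (min_le_left _ _))
      ((min_le_left _ _).trans (min_le_right _ _))
  refine ⟨p, hpath, δ, hδ, sub_nonneg.mpr hδx, hsb, supportCard_lt_of_signLE hsx hsb ?_⟩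
  -- `δ` is one of the three bounds, and the quantity attaining it drops out of the support
  have hst : tl (p.head hne) ≠ hd (p.getLast hne) := fun h => (h ▸ hs).not_gt ht
  obtain hδs | hδt | hδε : δ = b (tl (p.head hne)) ∨ δ = -b (hd (p.getLast hne)) ∨ δ = ε := by
    rcases min_choice (min (b (tl (p.head hne))) (-b (hd (p.getLast hne)))) ε with h | h
    · rcases min_choice (b (tl (p.head hne))) (-b (hd (p.getLast hne))) with h' | h'
      exacts [Or.inl (h.trans h'), Or.inr (Or.inl (h.trans h'))]
    · exact Or.inr (Or.inr h)
  · exact Or.inr ⟨_, by rw [hb']; simp [hst, hδs], hs.ne'⟩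
  · exact Or.inr ⟨_, by rw [hb']; simp [hst.symm, hδt], ht.ne⟩
  · exact Or.inl ⟨a₀, by simp [hδε, hεa₀], (hpos a₀ (arcCount_pos_iff.mp ha₀)).ne'⟩

theorem exists_flowPath_decomposition [DecidableEq α] (x : α → ℝ) (hx : 0 ≤ x) :
    ∃ (P : Finset (List α)) (f : List α → ℝ), (∀ p ∈ P, 0 < f p) ∧
      (∀ p ∈ P, IsFlowPath tl hd (netOutflow tl hd x) p) ∧ ∑ p ∈ P, f p • arcCount p = x := by
  induction hn : supportCard tl hd x using Nat.strong_induction_on generalizing x with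
  | _ n ih =>
  by_cases hx0 : x = 0
  · exact ⟨∅, 0, by simp, by simp, by simp [hx0]⟩
  obtain ⟨p, hp, δ, hδ, hx', hsign, hlt⟩ := exists_flowPath_peel hacyc hx hx0
  obtain ⟨P, f, hf, hP, hsum⟩ := ih _ (hn ▸ hlt) _ hx' rfl
  obtain ⟨f', hf', hsum'⟩ := exists_pos_combination_insert hf p hδ (v := arcCount)
  refine ⟨insert p P, f', hf', ?_, by rw [hsum', hsum, sub_add_cancel]⟩
  exact forall_mem_insert _ _ _ |>.mpr ⟨hp, fun q hq => (hP q hq).mono hsign⟩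

end FlowDecomposition

open Finset in
theorem stmt_4_general {V α : Type*} [Fintype V] [Fintype α] [DecidableEq V] [DecidableEq α]
    (tl hd : α → V) (b : V → ℝ) (x : α → ℝ)
    (hx : ∀ a, 0 ≤ x a)
    (hcons : ∀ v : V,
      ∑ a ∈ univ.filter (fun a => tl a = v), x a
        - ∑ a ∈ univ.filter (fun a => hd a = v), x a = b v)
    (hacyc : ∀ v : V, ¬ Relation.TransGen (fun u z => ∃ a, tl a = u ∧ hd a = z) v v) :
    ∃ (P : Finset (List α)) (f : List α → ℝ),
      P.card ≤ Fintype.card α ∧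
      (∀ p ∈ P, 0 < f p) ∧
      (∀ p ∈ P, ∃ hne : p ≠ [],
        p.Chain' (fun a a' => hd a = tl a') ∧
        0 < b (tl (p.head hne)) ∧ b (hd (p.getLast hne)) < 0) ∧
      (∀ a : α, ∑ p ∈ P, (p.count a : ℝ) * f p = x a) := by
  have hb : netOutflow tl hd x = b := funext hcons
  obtain ⟨P₀, f₀, hf₀, hP₀, hsum₀⟩ := exists_flowPath_decomposition hacyc x hx
  obtain ⟨P, hPP₀, f, hf, hsum, hcard⟩ :=
    exists_subset_pos_combination_card_le_finrank (K := ℝ) (v := arcCount) P₀ f₀ hf₀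
  refine ⟨P, f, by simpa using hcard, hf, fun p hp => hb ▸ hP₀ p (hPP₀ hp), fun a => ?_⟩
  rw [hsum₀] at hsum
  simpa [arcCount, mul_comm] using congrFun hsum a

open Finset in
/-- Flow decomposition: every nonnegative b-transshipment on a finite DAG
decomposes into at most |A| source-sink paths with positive values whose totals
on each arc equal the flow on that arc. Paths are recorded as lists of arcs. -/
theorem stmt_4 {V α : Type*} [Fintype V] [Fintype α] [DecidableEq V] [DecidableEq α]
    (tl hd : α → V) (b : V → ℝ) (x : α → ℝ)
    (hx : ∀ a, 0 ≤ x a)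
    (hb : ∑ v, b v = 0)
    (hcons : ∀ v : V,
      ∑ a ∈ univ.filter (fun a => tl a = v), x a
        - ∑ a ∈ univ.filter (fun a => hd a = v), x a = b v)
    (hacyc : ∀ v : V, ¬ Relation.TransGen (fun u z => ∃ a, tl a = u ∧ hd a = z) v v) :
    ∃ (P : Finset (List α)) (f : List α → ℝ),
      P.card ≤ Fintype.card α ∧
      (∀ p ∈ P, 0 < f p) ∧
      (∀ p ∈ P, ∃ hne : p ≠ [],
        p.Chain' (fun a a' => hd a = tl a') ∧
        0 < b (tl (p.head hne)) ∧ b (hd (p.getLast hne)) < 0) ∧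
      (∀ a : α, ∑ p ∈ P, (p.count a : ℝ) * f p = x a) :=
  stmt_4_general tl hd b x hx hcons hacyc
end

section
/- For all integers n ≥ 1, all reals c_a ≥ c_min > 0, d_max with d_max ≤ (1 − 1/n)·c_min, and all reals u_1,…,u_{n+1} ≥ 0 with ∑_{α=1}^{n+1} u_α ≤ 1 + (n+1)·ε where ε ≤ 1/((n²−1)(n+1)) and n ≥ 2, it holds that c_a/(n+1) + d_max·∑_{α=1}^{n+1} u_α ≤ c_a. -/
/-!
With `S = ∑ α, u α`, the bound on `ε` gives `S ≤ n² / (n² - 1)`, while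
`d_max ≤ (1 - 1/n) c_a`. Since `(1 - 1/n) · n² / (n² - 1) = n / (n + 1)`, the load
`d_max · S` is at most `n / (n + 1) · c_a`, which leaves exactly `c_a / (n + 1)` of capacity.
-/

lemma one_add_mul_le_sq_div_sq_sub_one {n ε : ℝ} (hn : 1 < n)
    (hε : ε ≤ 1 / ((n ^ 2 - 1) * (n + 1))) :
    1 + (n + 1) * ε ≤ n ^ 2 / (n ^ 2 - 1) := by
  have hsq : 0 < n ^ 2 - 1 := by nlinarith
  calc 1 + (n + 1) * ε ≤ 1 + (n + 1) * (1 / ((n ^ 2 - 1) * (n + 1))) := by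
        gcongr
    _ = n ^ 2 / (n ^ 2 - 1) := by field_simp; ring

lemma one_sub_inv_mul_sq_div_sq_sub_one {n : ℝ} (hn : 1 < n) :
    (1 - 1 / n) * (n ^ 2 / (n ^ 2 - 1)) = n / (n + 1) := by
  have hn1 : n - 1 ≠ 0 := by linarith
  have hn2 : n + 1 ≠ 0 := by linarith
  have hsq : n ^ 2 - 1 = (n - 1) * (n + 1) := by ring
  rw [hsq]
  field_simp

/-- Feasibility inequality for routing critically split sinks in rounds. -/
theorem stmt_5 (n : ℕ) (hn : 2 ≤ n) (ca cmin dmax ε : ℝ)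
    (hcmin : 0 < cmin) (hca : cmin ≤ ca)
    (hd : dmax ≤ (1 - 1 / (n : ℝ)) * cmin)
    (u : Fin (n + 1) → ℝ) (hu : ∀ α, 0 ≤ u α)
    (hε : ε ≤ 1 / (((n : ℝ) ^ 2 - 1) * ((n : ℝ) + 1)))
    (hsum : ∑ α, u α ≤ 1 + ((n : ℝ) + 1) * ε) :
    ca / ((n : ℝ) + 1) + dmax * ∑ α, u α ≤ ca := by
  have hn1 : (1 : ℝ) < n := by exact_mod_cast hn
  have hfrac : 0 ≤ 1 - 1 / (n : ℝ) := by
    rw [sub_nonneg, div_le_one (by linarith)]; exact hn1.le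
  have hdmax : dmax ≤ (1 - 1 / (n : ℝ)) * ca := hd.trans (by gcongr)
  have hload : dmax * ∑ α, u α ≤ (1 - 1 / (n : ℝ)) * ca * ((n : ℝ) ^ 2 / ((n : ℝ) ^ 2 - 1)) :=
    mul_le_mul hdmax (hsum.trans (one_add_mul_le_sq_div_sq_sub_one hn1 hε))
      (Finset.sum_nonneg fun α _ => hu α) (mul_nonneg hfrac (hcmin.le.trans hca))
  calc ca / ((n : ℝ) + 1) + dmax * ∑ α, u α
      ≤ ca / ((n : ℝ) + 1) + (1 - 1 / (n : ℝ)) * ca * ((n : ℝ) ^ 2 / ((n : ℝ) ^ 2 - 1)) := by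
        gcongr
    _ = ca := by
        rw [mul_right_comm, one_sub_inv_mul_sq_div_sq_sub_one hn1]
        field_simp
        ring
end
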